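/- Let U ⊆ ℂ be open and X : U → ℝ³ a smooth conformal minimal immersion: ∂X·∂X = 0, g := ∂X·∂̄X > 0, and ∂̄∂X = 0. Then the unit normal n := (∂ₓX × ∂_yX)/|∂ₓX × ∂_yX| satisfies the anti-instanton condition n × ∂n = −i·∂n on U, where the cross product of the real vector n with the ℂ³-valued vector ∂n is taken complex-bilinearly. -/

import Mathlib

open Complex

noncomputable section

/-- Wirtinger derivative `∂f = ½(∂ₓf − i ∂_yf)`. -/
def wirt {E : Type*} [NormedAddCommGroup E] [NormedSpace ℂ E] (f : ℂ → E) (z : ℂ) : E :=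
  (2 : ℂ)⁻¹ • (fderiv ℝ f z 1 - Complex.I • fderiv ℝ f z Complex.I)

/-- Conjugate Wirtinger derivative `∂̄f = ½(∂ₓf + i ∂_yf)`. -/
def wirtb {E : Type*} [NormedAddCommGroup E] [NormedSpace ℂ E] (f : ℂ → E) (z : ℂ) : E :=
  (2 : ℂ)⁻¹ • (fderiv ℝ f z 1 + Complex.I • fderiv ℝ f z Complex.I)

/-- Complex-bilinear dot product on ℂ³. -/
def cdot3 (a b : Fin 3 → ℂ) : ℂ := ∑ i, a i * b i

/-- Embedding ℝ³ ↪ ℂ³. -/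
def toC3 (v : Fin 3 → ℝ) : Fin 3 → ℂ := fun i => (v i : ℂ)

/-- Euclidean norm on ℝ³. -/
def rnorm3 (v : Fin 3 → ℝ) : ℝ := Real.sqrt (∑ i, v i ^ 2)

/-- Cross product on ℝ³. -/
def crossR (a b : Fin 3 → ℝ) : Fin 3 → ℝ :=
  ![a 1 * b 2 - a 2 * b 1, a 2 * b 0 - a 0 * b 2, a 0 * b 1 - a 1 * b 0]

/-- The complexification `z ↦ X(z)` of a map `X : ℂ → ℝ³`. -/
def cplx (X : ℂ → Fin 3 → ℝ) : ℂ → Fin 3 → ℂ := fun z => toC3 (X z)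

/-- The unit normal `n = (∂ₓX × ∂_yX)/|∂ₓX × ∂_yX|` of `X : ℂ → ℝ³`. -/
def unitNormal (X : ℂ → Fin 3 → ℝ) (z : ℂ) : Fin 3 → ℝ :=
  (rnorm3 (crossR (fderiv ℝ X z 1) (fderiv ℝ X z Complex.I)))⁻¹ •
    crossR (fderiv ℝ X z 1) (fderiv ℝ X z Complex.I)

/-- The mean curvature function `H = (∂̄∂X·n)/g` of a conformal immersion. -/
def meanCurvC (X : ℂ → Fin 3 → ℝ) (z : ℂ) : ℂ :=
  cdot3 (wirtb (fun w => wirt (cplx X) w) z) (toC3 (unitNormal X z)) /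
    cdot3 (wirt (cplx X) z) (wirtb (cplx X) z)

/-- The vector `n_ω = (2 Re ω, −2 Im ω, |ω|²−1)/(1+|ω|²)` on the unit sphere. -/
def gaussNormal (w : ℂ) : Fin 3 → ℝ :=
  (1 + Complex.normSq w)⁻¹ • ![2 * w.re, -2 * w.im, Complex.normSq w - 1]

/-- The complex-bilinear extension of the cross product to ℂ³. -/
def crossC (a b : Fin 3 → ℂ) : Fin 3 → ℂ :=
  ![a 1 * b 2 - a 2 * b 1, a 2 * b 0 - a 0 * b 2, a 0 * b 1 - a 1 * b 0]


section helpers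
variable {z : ℂ} {f g : ℂ → ℂ}

variable {z : ℂ} {f g : ℂ → ℂ}

lemma wirt_congr (h : f =ᶠ[nhds z] g) : wirt f z = wirt g z := by
  unfold wirt; rw [h.fderiv_eq]

lemma wirtb_congr (h : f =ᶠ[nhds z] g) : wirtb f z = wirtb g z := by
  unfold wirtb; rw [h.fderiv_eq]

lemma wirt_const (c : ℂ) : wirt (fun _ => c) z = 0 := by
  simp [wirt]

lemma wirt_add (hf : DifferentiableAt ℝ f z) (hg : DifferentiableAt ℝ g z) :
    wirt (fun w => f w + g w) z = wirt f z + wirt g z := by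
  simp only [wirt, fderiv_fun_add hf hg, ContinuousLinearMap.add_apply, smul_eq_mul]
  ring

lemma wirt_mul (hf : DifferentiableAt ℝ f z) (hg : DifferentiableAt ℝ g z) :
    wirt (fun w => f w * g w) z = f z * wirt g z + g z * wirt f z := by
  simp only [wirt, fderiv_fun_mul hf hg, ContinuousLinearMap.add_apply,
    ContinuousLinearMap.smul_apply, smul_eq_mul]
  ring

lemma wirtb_const_mul (c : ℂ) (hf : DifferentiableAt ℝ f z) :
    wirtb (fun w => c * f w) z = c * wirtb f z := by
  simp only [wirtb, fderiv_const_mul hf c, ContinuousLinearMap.smul_apply, smul_eq_mul]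
  ring

lemma fderiv_proj {M : Type*} [NormedAddCommGroup M] [NormedSpace ℝ M]
    {F : ℂ → Fin 3 → M} (h : DifferentiableAt ℝ F z) (v : ℂ) (i : Fin 3) :
    fderiv ℝ (fun w => F w i) z v = fderiv ℝ F z v i := by
  have : (fun w => F w i) = (ContinuousLinearMap.proj (R := ℝ) (φ := fun _ : Fin 3 => M) i) ∘ F :=
    rfl
  rw [this, fderiv_comp z (ContinuousLinearMap.differentiableAt _) h,
    ContinuousLinearMap.fderiv]
  rfl

lemma wirt_pi {F : ℂ → Fin 3 → ℂ} (h : DifferentiableAt ℝ F z) (i : Fin 3) :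
    wirt F z i = wirt (fun w => F w i) z := by
  simp [wirt, fderiv_proj h, Pi.smul_apply, smul_eq_mul]

lemma wirtb_pi {F : ℂ → Fin 3 → ℂ} (h : DifferentiableAt ℝ F z) (i : Fin 3) :
    wirtb F z i = wirtb (fun w => F w i) z := by
  simp [wirtb, fderiv_proj h, Pi.smul_apply, smul_eq_mul]

lemma fderiv_ofReal {h : ℂ → ℝ} (hd : DifferentiableAt ℝ h z) (v : ℂ) :
    fderiv ℝ (fun w => ((h w : ℝ) : ℂ)) z v = ((fderiv ℝ h z v : ℝ) : ℂ) := by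
  have : (fun w => ((h w : ℝ) : ℂ)) = Complex.ofRealCLM ∘ h := rfl
  rw [this, fderiv_comp z Complex.ofRealCLM.differentiableAt hd, ContinuousLinearMap.fderiv]
  rfl

lemma wirt_ofReal {h : ℂ → ℝ} (hd : DifferentiableAt ℝ h z) :
    wirt (fun w => ((h w : ℝ) : ℂ)) z
      = (2:ℂ)⁻¹ * (((fderiv ℝ h z 1 : ℝ) : ℂ) - Complex.I * ((fderiv ℝ h z Complex.I : ℝ) : ℂ)) := by
  simp [wirt, fderiv_ofReal hd, smul_eq_mul]

lemma wirtb_ofReal {h : ℂ → ℝ} (hd : DifferentiableAt ℝ h z) :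
    wirtb (fun w => ((h w : ℝ) : ℂ)) z
      = (2:ℂ)⁻¹ * (((fderiv ℝ h z 1 : ℝ) : ℂ) + Complex.I * ((fderiv ℝ h z Complex.I : ℝ) : ℂ)) := by
  simp [wirtb, fderiv_ofReal hd, smul_eq_mul]

lemma conj_wirtb_ofReal {h : ℂ → ℝ} (hd : DifferentiableAt ℝ h z) :
    (starRingEnd ℂ) (wirtb (fun w => ((h w : ℝ) : ℂ)) z)
      = wirt (fun w => ((h w : ℝ) : ℂ)) z := by
  rw [wirt_ofReal hd, wirtb_ofReal hd]
  simp only [map_mul, map_add, map_inv₀, Complex.conj_ofReal, Complex.conj_I, map_ofNat]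
  ring



lemma wirt_const_mul (c : ℂ) (hf : DifferentiableAt ℝ f z) :
    wirt (fun w => c * f w) z = c * wirt f z := by
  simp only [wirt, fderiv_const_mul hf c, ContinuousLinearMap.smul_apply, smul_eq_mul]
  ring

lemma wirtb_sub (hf : DifferentiableAt ℝ f z) (hg : DifferentiableAt ℝ g z) :
    wirtb (fun w => f w - g w) z = wirtb f z - wirtb g z := by
  simp only [wirtb, fderiv_fun_sub hf hg, ContinuousLinearMap.sub_apply, smul_eq_mul]
  ring

end helpers

lemma fin3_mk2 : (⟨2, by omega⟩ : Fin 3) = 2 := rfl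
lemma fin3_mk1 : (⟨1, by omega⟩ : Fin 3) = 1 := rfl
lemma fin3_mk0 : (⟨0, by omega⟩ : Fin 3) = 0 := rfl

lemma key_alg (a b : Fin 3 → ℝ) (w : Fin 3 → ℂ)
    (H1 : a 0 * b 0 + a 1 * b 1 + a 2 * b 2 = 0)
    (H2 : a 0 ^ 2 + a 1 ^ 2 + a 2 ^ 2 = b 0 ^ 2 + b 1 ^ 2 + b 2 ^ 2)
    (hs : 0 < a 0 ^ 2 + a 1 ^ 2 + a 2 ^ 2)
    (Hw1 : ∑ i, (crossR a b i : ℂ) * w i = 0)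
    (Hw2 : ∑ i, ((a i : ℂ) + Complex.I * (b i : ℂ)) * w i = 0) :
    crossC (toC3 ((rnorm3 (crossR a b))⁻¹ • crossR a b)) w = -(Complex.I • w) := by
  set s : ℝ := a 0 ^ 2 + a 1 ^ 2 + a 2 ^ 2 with hsdef
  have hNsq : ∑ i, crossR a b i ^ 2 = s ^ 2 := by
    simp only [Fin.sum_univ_three, crossR, Matrix.cons_val_zero, Matrix.cons_val_one,
      Matrix.head_cons, Matrix.cons_val_two, Matrix.tail_cons, hsdef]
    nlinarith [H1, H2, sq_nonneg (a 0), sq_nonneg (b 0)]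
  have hrn : rnorm3 (crossR a b) = s := by
    rw [rnorm3, hNsq, Real.sqrt_sq hs.le]
  have hsC : (s : ℂ) ≠ 0 := by exact_mod_cast hs.ne'
  have H1c : (a 0 : ℂ) * b 0 + a 1 * b 1 + a 2 * b 2 = 0 := by exact_mod_cast H1
  have H2c : (a 0 : ℂ) ^ 2 + a 1 ^ 2 + a 2 ^ 2 = (b 0 : ℂ) ^ 2 + b 1 ^ 2 + b 2 ^ 2 := by
    exact_mod_cast H2
  have Hw1' : ((a 1 : ℂ) * b 2 - a 2 * b 1) * w 0 + ((a 2 : ℂ) * b 0 - a 0 * b 2) * w 1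
      + ((a 0 : ℂ) * b 1 - a 1 * b 0) * w 2 = 0 := by
    have h := Hw1
    simp only [Fin.sum_univ_three, crossR, Matrix.cons_val_zero, Matrix.cons_val_one,
      Matrix.head_cons, Matrix.cons_val_two, Matrix.tail_cons] at h
    push_cast at h
    linear_combination h
  have Hw2' : ((a 0 : ℂ) + Complex.I * b 0) * w 0 + ((a 1 : ℂ) + Complex.I * b 1) * w 1
      + ((a 2 : ℂ) + Complex.I * b 2) * w 2 = 0 := by
    simpa [Fin.sum_univ_three] using Hw2
  have hsCdef : (s : ℂ) = ((a 0 : ℂ)^2 + (a 1 : ℂ)^2 + (a 2 : ℂ)^2) := by push_cast [hsdef]; ring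
  have hscC : ((a 0 : ℂ)^2 + (a 1 : ℂ)^2 + (a 2 : ℂ)^2) ≠ (0 : ℂ) := by rw [← hsCdef]; exact hsC
  have hk0 : ((a 0 : ℂ)^2 + (a 1 : ℂ)^2 + (a 2 : ℂ)^2) * (((a 2 : ℂ)*(b 0 : ℂ) - (a 0 : ℂ)*(b 2 : ℂ)) * w 2 - ((a 0 : ℂ)*(b 1 : ℂ) - (a 1 : ℂ)*(b 0 : ℂ)) * w 1) = ((a 0 : ℂ)^2 + (a 1 : ℂ)^2 + (a 2 : ℂ)^2) * (-(Complex.I * (((a 0 : ℂ)^2 + (a 1 : ℂ)^2 + (a 2 : ℂ)^2) * w 0))) := by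
    linear_combination (((a 0 : ℂ)^2 + (a 1 : ℂ)^2 + (a 2 : ℂ)^2) * (b 0 : ℂ) + Complex.I * ((a 0 : ℂ)^2 + (a 1 : ℂ)^2 + (a 2 : ℂ)^2) * (a 0 : ℂ)) * Hw2'
      + Complex.I * ((a 1 : ℂ)*(b 2 : ℂ) - (a 2 : ℂ)*(b 1 : ℂ)) * Hw1'
      + Complex.I * (w 0 * ((a 2 : ℂ)*(b 2 : ℂ) + (a 1 : ℂ)*(b 1 : ℂ) - (a 0 : ℂ)*(b 0 : ℂ)) + w 1 * (-(a 1 : ℂ)*(b 0 : ℂ) - (a 0 : ℂ)*(b 1 : ℂ)) + w 2 * (-(a 2 : ℂ)*(b 0 : ℂ) - (a 0 : ℂ)*(b 2 : ℂ))) * H1c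
      + Complex.I * (w 0 * ((a 1 : ℂ)^2 + (a 2 : ℂ)^2) + w 1 * (-(a 0 : ℂ)*(a 1 : ℂ)) + w 2 * (-(a 0 : ℂ)*(a 2 : ℂ))) * H2c
      + (-((a 0 : ℂ) * ((a 0 : ℂ)^2 + (a 1 : ℂ)^2 + (a 2 : ℂ)^2) * ((b 0 : ℂ) * w 0 + (b 1 : ℂ) * w 1 + (b 2 : ℂ) * w 2))) * Complex.I_sq
  have hQ0 : (((a 2 : ℂ)*(b 0 : ℂ) - (a 0 : ℂ)*(b 2 : ℂ)) * w 2 - ((a 0 : ℂ)*(b 1 : ℂ) - (a 1 : ℂ)*(b 0 : ℂ)) * w 1) = -(Complex.I * (((a 0 : ℂ)^2 + (a 1 : ℂ)^2 + (a 2 : ℂ)^2) * w 0)) := mul_left_cancel₀ hscC hk0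
  rw [← hsCdef] at hQ0
  have hk1 : ((a 0 : ℂ)^2 + (a 1 : ℂ)^2 + (a 2 : ℂ)^2) * (((a 0 : ℂ)*(b 1 : ℂ) - (a 1 : ℂ)*(b 0 : ℂ)) * w 0 - ((a 1 : ℂ)*(b 2 : ℂ) - (a 2 : ℂ)*(b 1 : ℂ)) * w 2) = ((a 0 : ℂ)^2 + (a 1 : ℂ)^2 + (a 2 : ℂ)^2) * (-(Complex.I * (((a 0 : ℂ)^2 + (a 1 : ℂ)^2 + (a 2 : ℂ)^2) * w 1))) := by
    linear_combination (((a 0 : ℂ)^2 + (a 1 : ℂ)^2 + (a 2 : ℂ)^2) * (b 1 : ℂ) + Complex.I * ((a 0 : ℂ)^2 + (a 1 : ℂ)^2 + (a 2 : ℂ)^2) * (a 1 : ℂ)) * Hw2'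
      + Complex.I * ((a 2 : ℂ)*(b 0 : ℂ) - (a 0 : ℂ)*(b 2 : ℂ)) * Hw1'
      + Complex.I * (w 0 * (-(a 1 : ℂ)*(b 0 : ℂ) - (a 0 : ℂ)*(b 1 : ℂ)) + w 1 * ((a 2 : ℂ)*(b 2 : ℂ) - (a 1 : ℂ)*(b 1 : ℂ) + (a 0 : ℂ)*(b 0 : ℂ)) + w 2 * (-(a 2 : ℂ)*(b 1 : ℂ) - (a 1 : ℂ)*(b 2 : ℂ))) * H1c
      + Complex.I * (w 0 * (-(a 0 : ℂ)*(a 1 : ℂ)) + w 1 * ((a 0 : ℂ)^2 + (a 2 : ℂ)^2) + w 2 * (-(a 1 : ℂ)*(a 2 : ℂ))) * H2c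
      + (-((a 1 : ℂ) * ((a 0 : ℂ)^2 + (a 1 : ℂ)^2 + (a 2 : ℂ)^2) * ((b 0 : ℂ) * w 0 + (b 1 : ℂ) * w 1 + (b 2 : ℂ) * w 2))) * Complex.I_sq
  have hQ1 : (((a 0 : ℂ)*(b 1 : ℂ) - (a 1 : ℂ)*(b 0 : ℂ)) * w 0 - ((a 1 : ℂ)*(b 2 : ℂ) - (a 2 : ℂ)*(b 1 : ℂ)) * w 2) = -(Complex.I * (((a 0 : ℂ)^2 + (a 1 : ℂ)^2 + (a 2 : ℂ)^2) * w 1)) := mul_left_cancel₀ hscC hk1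
  rw [← hsCdef] at hQ1
  have hk2 : ((a 0 : ℂ)^2 + (a 1 : ℂ)^2 + (a 2 : ℂ)^2) * (((a 1 : ℂ)*(b 2 : ℂ) - (a 2 : ℂ)*(b 1 : ℂ)) * w 1 - ((a 2 : ℂ)*(b 0 : ℂ) - (a 0 : ℂ)*(b 2 : ℂ)) * w 0) = ((a 0 : ℂ)^2 + (a 1 : ℂ)^2 + (a 2 : ℂ)^2) * (-(Complex.I * (((a 0 : ℂ)^2 + (a 1 : ℂ)^2 + (a 2 : ℂ)^2) * w 2))) := by
    linear_combination (((a 0 : ℂ)^2 + (a 1 : ℂ)^2 + (a 2 : ℂ)^2) * (b 2 : ℂ) + Complex.I * ((a 0 : ℂ)^2 + (a 1 : ℂ)^2 + (a 2 : ℂ)^2) * (a 2 : ℂ)) * Hw2'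
      + Complex.I * ((a 0 : ℂ)*(b 1 : ℂ) - (a 1 : ℂ)*(b 0 : ℂ)) * Hw1'
      + Complex.I * (w 0 * (-(a 2 : ℂ)*(b 0 : ℂ) - (a 0 : ℂ)*(b 2 : ℂ)) + w 1 * (-(a 2 : ℂ)*(b 1 : ℂ) - (a 1 : ℂ)*(b 2 : ℂ)) + w 2 * (-(a 2 : ℂ)*(b 2 : ℂ) + (a 1 : ℂ)*(b 1 : ℂ) + (a 0 : ℂ)*(b 0 : ℂ))) * H1c
      + Complex.I * (w 0 * (-(a 0 : ℂ)*(a 2 : ℂ)) + w 1 * (-(a 1 : ℂ)*(a 2 : ℂ)) + w 2 * ((a 0 : ℂ)^2 + (a 1 : ℂ)^2)) * H2c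
      + (-((a 2 : ℂ) * ((a 0 : ℂ)^2 + (a 1 : ℂ)^2 + (a 2 : ℂ)^2) * ((b 0 : ℂ) * w 0 + (b 1 : ℂ) * w 1 + (b 2 : ℂ) * w 2))) * Complex.I_sq
  have hQ2 : (((a 1 : ℂ)*(b 2 : ℂ) - (a 2 : ℂ)*(b 1 : ℂ)) * w 1 - ((a 2 : ℂ)*(b 0 : ℂ) - (a 0 : ℂ)*(b 2 : ℂ)) * w 0) = -(Complex.I * (((a 0 : ℂ)^2 + (a 1 : ℂ)^2 + (a 2 : ℂ)^2) * w 2)) := mul_left_cancel₀ hscC hk2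
  rw [← hsCdef] at hQ2
  funext k
  rw [hrn]
  fin_cases k <;>
    simp only [crossC, toC3, crossR, Pi.smul_apply, smul_eq_mul, Pi.neg_apply,
      Matrix.cons_val_zero, Matrix.cons_val_one, Matrix.head_cons, Matrix.cons_val_two,
      Matrix.tail_cons, Fin.isValue, Complex.ofReal_mul, Complex.ofReal_inv,
      Complex.ofReal_sub, fin3_mk0, fin3_mk1, fin3_mk2] <;>
    field_simp
  · linear_combination hQ0
  · linear_combination hQ1
  · linear_combination hQ2

lemma crossSq (a b : Fin 3 → ℝ)
    (H1 : a 0 * b 0 + a 1 * b 1 + a 2 * b 2 = 0)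
    (H2 : a 0 ^ 2 + a 1 ^ 2 + a 2 ^ 2 = b 0 ^ 2 + b 1 ^ 2 + b 2 ^ 2) :
    ∑ i, crossR a b i ^ 2 = (a 0 ^ 2 + a 1 ^ 2 + a 2 ^ 2) ^ 2 := by
  simp only [Fin.sum_univ_three, crossR, Matrix.cons_val_zero, Matrix.cons_val_one,
    Matrix.head_cons, Matrix.cons_val_two, Matrix.tail_cons]
  nlinarith [H1, H2, sq_nonneg (a 0), sq_nonneg (b 0)]

lemma rnorm_cross (a b : Fin 3 → ℝ)
    (H1 : a 0 * b 0 + a 1 * b 1 + a 2 * b 2 = 0)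
    (H2 : a 0 ^ 2 + a 1 ^ 2 + a 2 ^ 2 = b 0 ^ 2 + b 1 ^ 2 + b 2 ^ 2)
    (hs : 0 ≤ a 0 ^ 2 + a 1 ^ 2 + a 2 ^ 2) :
    rnorm3 (crossR a b) = a 0 ^ 2 + a 1 ^ 2 + a 2 ^ 2 := by
  rw [rnorm3, crossSq a b H1 H2, Real.sqrt_sq hs]

set_option maxHeartbeats 1600000 in
/-- the unit normal of a conformal minimal immersion satisfies the
anti-instanton condition `n × ∂n = −i ∂n`. -/
theorem minimal_normal_is_anti_instanton
    (U : Set ℂ) (hU : IsOpen U)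
    (X : ℂ → Fin 3 → ℝ) (hX : ContDiffOn ℝ (⊤ : ℕ∞) X U)
    (hconf : ∀ z ∈ U, cdot3 (wirt (cplx X) z) (wirt (cplx X) z) = 0)
    (hreg : ∀ z ∈ U, ∃ r : ℝ, 0 < r ∧ cdot3 (wirt (cplx X) z) (wirtb (cplx X) z) = (r : ℂ))
    (hmin : ∀ z ∈ U, wirtb (fun w => wirt (cplx X) w) z = 0) :
    ∀ z ∈ U,
      crossC (toC3 (unitNormal X z)) (wirt (fun w => toC3 (unitNormal X w)) z) =
        -(Complex.I • wirt (fun w => toC3 (unitNormal X w)) z) := by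
  intro z hz
  have hUz : U ∈ nhds z := hU.mem_nhds hz
  have hXd : ∀ u ∈ U, DifferentiableAt ℝ X u := fun u hu =>
    (hX.contDiffAt (hU.mem_nhds hu)).differentiableAt (by simp)
  have hXid : ∀ u ∈ U, ∀ i, DifferentiableAt ℝ (fun w => X w i) u := fun u hu i =>
    differentiableAt_pi.1 (hXd u hu) i
  have hT : ContDiff ℝ (⊤ : ℕ∞) (fun v : Fin 3 → ℝ => toC3 v) :=
    (ContinuousLinearMap.pi (fun i : Fin 3 =>
      Complex.ofRealCLM.comp (ContinuousLinearMap.proj i))).contDiff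
  have hcplxc : ∀ u ∈ U, ContDiffAt ℝ (⊤ : ℕ∞) (cplx X) u := fun u hu =>
    hT.contDiffAt.comp u (hX.contDiffAt (hU.mem_nhds hu))
  have hcplxd : ∀ u ∈ U, DifferentiableAt ℝ (cplx X) u := fun u hu =>
    (hcplxc u hu).differentiableAt (by simp)
  -- formulas for wirt/wirtb of cplx X on U
  have hwirtX : ∀ u ∈ U, ∀ i, wirt (cplx X) u i
      = (2:ℂ)⁻¹ * (((fderiv ℝ X u 1 i : ℝ) : ℂ) - Complex.I * ((fderiv ℝ X u Complex.I i : ℝ) : ℂ)) := by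
    intro u hu i
    rw [wirt_pi (hcplxd u hu) i]
    have h1 : (fun w => cplx X w i) = fun w => ((X w i : ℝ) : ℂ) := rfl
    rw [h1, wirt_ofReal (hXid u hu i), fderiv_proj (hXd u hu) 1 i,
      fderiv_proj (hXd u hu) Complex.I i]
  have hwirtbX : ∀ u ∈ U, ∀ i, wirtb (cplx X) u i
      = (2:ℂ)⁻¹ * (((fderiv ℝ X u 1 i : ℝ) : ℂ) + Complex.I * ((fderiv ℝ X u Complex.I i : ℝ) : ℂ)) := by
    intro u hu i
    rw [wirtb_pi (hcplxd u hu) i]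
    have h1 : (fun w => cplx X w i) = fun w => ((X w i : ℝ) : ℂ) := rfl
    rw [h1, wirtb_ofReal (hXid u hu i), fderiv_proj (hXd u hu) 1 i,
      fderiv_proj (hXd u hu) Complex.I i]
  -- real conformality relations on U
  have hABAA : ∀ u ∈ U, (fderiv ℝ X u 1 0 * fderiv ℝ X u Complex.I 0 + fderiv ℝ X u 1 1 * fderiv ℝ X u Complex.I 1 + fderiv ℝ X u 1 2 * fderiv ℝ X u Complex.I 2 = 0) ∧ (fderiv ℝ X u 1 0 ^ 2 + fderiv ℝ X u 1 1 ^ 2 + fderiv ℝ X u 1 2 ^ 2 = fderiv ℝ X u Complex.I 0 ^ 2 + fderiv ℝ X u Complex.I 1 ^ 2 + fderiv ℝ X u Complex.I 2 ^ 2) := by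
    intro u hu
    have e := hconf u hu
    rw [cdot3, Fin.sum_univ_three, hwirtX u hu 0, hwirtX u hu 1, hwirtX u hu 2] at e
    have e2 : ((fderiv ℝ X u 1 0 ^ 2 + fderiv ℝ X u 1 1 ^ 2 + fderiv ℝ X u 1 2 ^ 2 - (fderiv ℝ X u Complex.I 0 ^ 2 + fderiv ℝ X u Complex.I 1 ^ 2 + fderiv ℝ X u Complex.I 2 ^ 2) : ℝ) : ℂ) = ((2 * (fderiv ℝ X u 1 0 * fderiv ℝ X u Complex.I 0 + fderiv ℝ X u 1 1 * fderiv ℝ X u Complex.I 1 + fderiv ℝ X u 1 2 * fderiv ℝ X u Complex.I 2) : ℝ) : ℂ) * Complex.I := by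
      push_cast
      linear_combination 4 * e + (-(((fderiv ℝ X u Complex.I 0 : ℝ) : ℂ) ^ 2 + ((fderiv ℝ X u Complex.I 1 : ℝ) : ℂ) ^ 2 + ((fderiv ℝ X u Complex.I 2 : ℝ) : ℂ) ^ 2)) * Complex.I_sq
    rw [Complex.ext_iff] at e2
    simp only [Complex.ofReal_re, Complex.ofReal_im, Complex.mul_re, Complex.mul_im,
      Complex.I_re, Complex.I_im, mul_zero, mul_one, zero_mul, sub_zero, add_zero,
      zero_add, sub_self] at e2
    obtain ⟨h1, h2⟩ := e2
    constructor
    · linarith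
    · linarith
  have hAB : ∀ u ∈ U, fderiv ℝ X u 1 0 * fderiv ℝ X u Complex.I 0 + fderiv ℝ X u 1 1 * fderiv ℝ X u Complex.I 1 + fderiv ℝ X u 1 2 * fderiv ℝ X u Complex.I 2 = 0 := fun u hu => (hABAA u hu).1
  have hAA : ∀ u ∈ U, fderiv ℝ X u 1 0 ^ 2 + fderiv ℝ X u 1 1 ^ 2 + fderiv ℝ X u 1 2 ^ 2 = fderiv ℝ X u Complex.I 0 ^ 2 + fderiv ℝ X u Complex.I 1 ^ 2 + fderiv ℝ X u Complex.I 2 ^ 2 := fun u hu => (hABAA u hu).2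
  -- positivity of s on U
  have hspos : ∀ u ∈ U, 0 < fderiv ℝ X u 1 0 ^ 2 + fderiv ℝ X u 1 1 ^ 2 + fderiv ℝ X u 1 2 ^ 2 := by
    intro u hu
    obtain ⟨r, hr, e⟩ := hreg u hu
    rw [cdot3, Fin.sum_univ_three, hwirtX u hu 0, hwirtX u hu 1, hwirtX u hu 2,
      hwirtbX u hu 0, hwirtbX u hu 1, hwirtbX u hu 2] at e
    have e2 : ((fderiv ℝ X u 1 0 ^ 2 + fderiv ℝ X u 1 1 ^ 2 + fderiv ℝ X u 1 2 ^ 2 + (fderiv ℝ X u Complex.I 0 ^ 2 + fderiv ℝ X u Complex.I 1 ^ 2 + fderiv ℝ X u Complex.I 2 ^ 2) : ℝ) : ℂ) = ((4 * r : ℝ) : ℂ) := by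
      push_cast
      linear_combination 4 * e + ((((fderiv ℝ X u Complex.I 0 : ℝ) : ℂ) ^ 2 + ((fderiv ℝ X u Complex.I 1 : ℝ) : ℂ) ^ 2 + ((fderiv ℝ X u Complex.I 2 : ℝ) : ℂ) ^ 2)) * Complex.I_sq
    have e3 : fderiv ℝ X u 1 0 ^ 2 + fderiv ℝ X u 1 1 ^ 2 + fderiv ℝ X u 1 2 ^ 2 + (fderiv ℝ X u Complex.I 0 ^ 2 + fderiv ℝ X u Complex.I 1 ^ 2 + fderiv ℝ X u Complex.I 2 ^ 2) = 4 * r := by exact_mod_cast e2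
    have := hAA u hu
    linarith
  -- differentiability infrastructure at z
  have hXz : ContDiffAt ℝ (⊤ : ℕ∞) X z := hX.contDiffAt hUz
  have hfdX : ContDiffAt ℝ 1 (fderiv ℝ X) z := hXz.fderiv_right (WithTop.coe_le_coe.mpr le_top)
  have hdA : DifferentiableAt ℝ (fun w => fderiv ℝ X w (1:ℂ)) z :=
    (ContinuousLinearMap.apply ℝ (Fin 3 → ℝ) (1:ℂ)).differentiableAt.comp z
      (hfdX.differentiableAt one_ne_zero)
  have hdB : DifferentiableAt ℝ (fun w => fderiv ℝ X w Complex.I) z :=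
    (ContinuousLinearMap.apply ℝ (Fin 3 → ℝ) Complex.I).differentiableAt.comp z
      (hfdX.differentiableAt one_ne_zero)
  have hdAi : ∀ i, DifferentiableAt ℝ (fun w => fderiv ℝ X w 1 i) z := fun i =>
    differentiableAt_pi.1 hdA i
  have hdBi : ∀ i, DifferentiableAt ℝ (fun w => fderiv ℝ X w Complex.I i) z := fun i =>
    differentiableAt_pi.1 hdB i
  have hdNi : ∀ i, DifferentiableAt ℝ
      (fun w => crossR (fderiv ℝ X w 1) (fderiv ℝ X w Complex.I) i) z := by
    intro i
    fin_cases i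
    · simp only [crossR, Matrix.cons_val_zero]
      exact ((hdAi 1).mul (hdBi 2)).sub ((hdAi 2).mul (hdBi 1))
    · simp only [crossR, Matrix.cons_val_one, Matrix.head_cons]
      exact ((hdAi 2).mul (hdBi 0)).sub ((hdAi 0).mul (hdBi 2))
    · simp only [crossR, Matrix.cons_val_two, Matrix.tail_cons, Matrix.head_cons]
      exact ((hdAi 0).mul (hdBi 1)).sub ((hdAi 1).mul (hdBi 0))
  have hszpos : 0 < fderiv ℝ X z 1 0 ^ 2 + fderiv ℝ X z 1 1 ^ 2 + fderiv ℝ X z 1 2 ^ 2 := hspos z hz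
  have hrhoz : rnorm3 (crossR (fderiv ℝ X z 1) (fderiv ℝ X z Complex.I)) = fderiv ℝ X z 1 0 ^ 2 + fderiv ℝ X z 1 1 ^ 2 + fderiv ℝ X z 1 2 ^ 2 :=
    rnorm_cross _ _ (hAB z hz) (hAA z hz) hszpos.le
  have hqz : (∑ i, crossR (fderiv ℝ X z 1) (fderiv ℝ X z Complex.I) i ^ 2) ≠ 0 := by
    rw [crossSq _ _ (hAB z hz) (hAA z hz)]
    positivity
  have hdq : DifferentiableAt ℝ
      (fun w => ∑ i, crossR (fderiv ℝ X w 1) (fderiv ℝ X w Complex.I) i ^ 2) z := by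
    simp only [Fin.sum_univ_three]
    exact (((hdNi 0).pow 2).add ((hdNi 1).pow 2)).add ((hdNi 2).pow 2)
  have hdrho : DifferentiableAt ℝ
      (fun w => rnorm3 (crossR (fderiv ℝ X w 1) (fderiv ℝ X w Complex.I))) z := by
    have h1 : (fun w => rnorm3 (crossR (fderiv ℝ X w 1) (fderiv ℝ X w Complex.I)))
        = (fun t => Real.sqrt t) ∘
          (fun w => ∑ i, crossR (fderiv ℝ X w 1) (fderiv ℝ X w Complex.I) i ^ 2) := rfl
    rw [h1]
    exact ((Real.contDiffAt_sqrt (n := 1) hqz).differentiableAt one_ne_zero).comp z hdq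
  have hrne : rnorm3 (crossR (fderiv ℝ X z 1) (fderiv ℝ X z Complex.I)) ≠ 0 := by
    rw [hrhoz]; exact hszpos.ne'
  have hdni : ∀ i, DifferentiableAt ℝ (fun w => unitNormal X w i) z := by
    intro i
    have h1 : (fun w => unitNormal X w i) = fun w =>
        (rnorm3 (crossR (fderiv ℝ X w 1) (fderiv ℝ X w Complex.I)))⁻¹ *
          crossR (fderiv ℝ X w 1) (fderiv ℝ X w Complex.I) i := rfl
    rw [h1]
    exact (hdrho.inv hrne).mul (hdNi i)
  have hdcni : ∀ i, DifferentiableAt ℝ (fun w => ((unitNormal X w i : ℝ) : ℂ)) z := fun i =>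
    Complex.ofRealCLM.differentiableAt.comp z (hdni i)
  have hdcn : DifferentiableAt ℝ (fun w => toC3 (unitNormal X w)) z :=
    differentiableAt_pi.2 fun i => hdcni i
  have hwvi : ∀ i, wirt (fun w => toC3 (unitNormal X w)) z i
      = wirt (fun w => ((unitNormal X w i : ℝ) : ℂ)) z := fun i => wirt_pi hdcn i
  -- (i) unit-length relation
  have hn2 : ∀ u ∈ U, unitNormal X u 0 * unitNormal X u 0
      + (unitNormal X u 1 * unitNormal X u 1 + unitNormal X u 2 * unitNormal X u 2) = 1 := by
    intro u hu
    have hrh : rnorm3 (crossR (fderiv ℝ X u 1) (fderiv ℝ X u Complex.I))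
        = fderiv ℝ X u 1 0 ^ 2 + fderiv ℝ X u 1 1 ^ 2 + fderiv ℝ X u 1 2 ^ 2 :=
      rnorm_cross _ _ (hAB u hu) (hAA u hu) (hspos u hu).le
    have hNsq := crossSq (fderiv ℝ X u 1) (fderiv ℝ X u Complex.I) (hAB u hu) (hAA u hu)
    simp only [Fin.sum_univ_three] at hNsq
    have hsu := hspos u hu
    have h1 : ∀ i, unitNormal X u i
        = (rnorm3 (crossR (fderiv ℝ X u 1) (fderiv ℝ X u Complex.I)))⁻¹ *
          crossR (fderiv ℝ X u 1) (fderiv ℝ X u Complex.I) i := fun i => rfl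
    rw [h1 0, h1 1, h1 2, hrh]
    field_simp
    linarith [hNsq]
  have hq1 : wirt (fun w => ((unitNormal X w 0 : ℝ) : ℂ) * ((unitNormal X w 0 : ℝ) : ℂ) + (((unitNormal X w 1 : ℝ) : ℂ) * ((unitNormal X w 1 : ℝ) : ℂ) + ((unitNormal X w 2 : ℝ) : ℂ) * ((unitNormal X w 2 : ℝ) : ℂ))) z = 0 := by
    have hev : (fun w => ((unitNormal X w 0 : ℝ) : ℂ) * ((unitNormal X w 0 : ℝ) : ℂ) + (((unitNormal X w 1 : ℝ) : ℂ) * ((unitNormal X w 1 : ℝ) : ℂ) + ((unitNormal X w 2 : ℝ) : ℂ) * ((unitNormal X w 2 : ℝ) : ℂ))) =ᶠ[nhds z] (fun _ => (1:ℂ)) :=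
      Filter.eventuallyEq_of_mem hUz fun u hu => by
        have h := hn2 u hu
        exact_mod_cast congrArg (fun t : ℝ => (t : ℂ)) h
    rw [wirt_congr hev, wirt_const]
  rw [wirt_add (f := fun w => ((unitNormal X w 0 : ℝ) : ℂ) * ((unitNormal X w 0 : ℝ) : ℂ))
      (g := fun w => ((unitNormal X w 1 : ℝ) : ℂ) * ((unitNormal X w 1 : ℝ) : ℂ) + ((unitNormal X w 2 : ℝ) : ℂ) * ((unitNormal X w 2 : ℝ) : ℂ))
      ((hdcni 0).mul (hdcni 0)) (((hdcni 1).mul (hdcni 1)).add ((hdcni 2).mul (hdcni 2))),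
    wirt_add (f := fun w => ((unitNormal X w 1 : ℝ) : ℂ) * ((unitNormal X w 1 : ℝ) : ℂ)) (g := fun w => ((unitNormal X w 2 : ℝ) : ℂ) * ((unitNormal X w 2 : ℝ) : ℂ))
      ((hdcni 1).mul (hdcni 1)) ((hdcni 2).mul (hdcni 2)),
    wirt_mul (hdcni 0) (hdcni 0), wirt_mul (hdcni 1) (hdcni 1),
    wirt_mul (hdcni 2) (hdcni 2)] at hq1
  have hNz : ∀ i, ((crossR (fderiv ℝ X z 1) (fderiv ℝ X z Complex.I) i : ℝ) : ℂ)
      = ((fderiv ℝ X z 1 0 ^ 2 + fderiv ℝ X z 1 1 ^ 2 + fderiv ℝ X z 1 2 ^ 2 : ℝ) : ℂ) * ((unitNormal X z i : ℝ) : ℂ) := by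
    intro i
    have h1 : unitNormal X z i
        = (rnorm3 (crossR (fderiv ℝ X z 1) (fderiv ℝ X z Complex.I)))⁻¹ *
          crossR (fderiv ℝ X z 1) (fderiv ℝ X z Complex.I) i := rfl
    rw [h1, hrhoz]
    have hs0 : ((fderiv ℝ X z 1 0 : ℝ) : ℂ) ^ 2 + ((fderiv ℝ X z 1 1 : ℝ) : ℂ) ^ 2 + ((fderiv ℝ X z 1 2 : ℝ) : ℂ) ^ 2 ≠ 0 := by exact_mod_cast hszpos.ne'
    push_cast
    rw [← mul_assoc, mul_inv_cancel₀ hs0, one_mul]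
  have Hw1 : ∑ i, ((crossR (fderiv ℝ X z 1) (fderiv ℝ X z Complex.I) i : ℝ) : ℂ)
      * wirt (fun w => toC3 (unitNormal X w)) z i = 0 := by
    rw [Fin.sum_univ_three, hNz 0, hNz 1, hNz 2, hwvi 0, hwvi 1, hwvi 2]
    linear_combination (((fderiv ℝ X z 1 0 ^ 2 + fderiv ℝ X z 1 1 ^ 2 + fderiv ℝ X z 1 2 ^ 2 : ℝ) : ℂ) / 2) * hq1
  -- (ii) minimality relation
  have hdcplxz : ContDiffAt ℝ (⊤ : ℕ∞) (cplx X) z := hcplxc z hz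
  have hfdc : ContDiffAt ℝ 1 (fderiv ℝ (cplx X)) z := hdcplxz.fderiv_right (WithTop.coe_le_coe.mpr le_top)
  have hdG1 : DifferentiableAt ℝ (fun w => fderiv ℝ (cplx X) w (1:ℂ)) z :=
    (ContinuousLinearMap.apply ℝ (Fin 3 → ℂ) (1:ℂ)).differentiableAt.comp z
      (hfdc.differentiableAt one_ne_zero)
  have hdGI : DifferentiableAt ℝ (fun w => fderiv ℝ (cplx X) w Complex.I) z :=
    (ContinuousLinearMap.apply ℝ (Fin 3 → ℂ) Complex.I).differentiableAt.comp z
      (hfdc.differentiableAt one_ne_zero)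
  have hdW : DifferentiableAt ℝ (fun w => wirt (cplx X) w) z := by
    have h1 : (fun w => wirt (cplx X) w) = fun w =>
        (2:ℂ)⁻¹ • (fderiv ℝ (cplx X) w 1 - Complex.I • fderiv ℝ (cplx X) w Complex.I) := rfl
    rw [h1]
    exact (hdG1.sub (hdGI.const_smul Complex.I)).const_smul ((2:ℂ)⁻¹)
  have hmin0 : ∀ i, wirtb (fun w => wirt (cplx X) w i) z = 0 := by
    intro i
    rw [← wirtb_pi hdW i, hmin z hz]
    rfl
  have hdAc : ∀ i, DifferentiableAt ℝ (fun w => ((fderiv ℝ X w 1 i : ℝ) : ℂ)) z := fun i =>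
    Complex.ofRealCLM.differentiableAt.comp z (hdAi i)
  have hdBc : ∀ i, DifferentiableAt ℝ (fun w => ((fderiv ℝ X w Complex.I i : ℝ) : ℂ)) z := fun i =>
    Complex.ofRealCLM.differentiableAt.comp z (hdBi i)
  have hchib : ∀ i, wirtb (fun w => ((fderiv ℝ X w 1 i : ℝ) : ℂ)) z
      - Complex.I * wirtb (fun w => ((fderiv ℝ X w Complex.I i : ℝ) : ℂ)) z = 0 := by
    intro i
    have hev : (fun w => wirt (cplx X) w i) =ᶠ[nhds z]
        (fun w => (2:ℂ)⁻¹ * (((fderiv ℝ X w 1 i : ℝ) : ℂ) - Complex.I * ((fderiv ℝ X w Complex.I i : ℝ) : ℂ))) :=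
      Filter.eventuallyEq_of_mem hUz fun u hu => hwirtX u hu i
    have h0 := hmin0 i
    rw [wirtb_congr hev,
      wirtb_const_mul ((2:ℂ)⁻¹) ((hdAc i).fun_sub ((hdBc i).const_mul Complex.I)),
      wirtb_sub (hdAc i) ((hdBc i).const_mul Complex.I),
      wirtb_const_mul Complex.I (hdBc i)] at h0
    linear_combination 2 * h0
  have hchi : ∀ i, wirt (fun w => ((fderiv ℝ X w 1 i : ℝ) : ℂ)) z
      + Complex.I * wirt (fun w => ((fderiv ℝ X w Complex.I i : ℝ) : ℂ)) z = 0 := by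
    intro i
    have hA' := conj_wirtb_ofReal (hdAi i)
    have hB' := conj_wirtb_ofReal (hdBi i)
    have h0 := congrArg (starRingEnd ℂ) (hchib i)
    rw [map_sub, map_mul, Complex.conj_I, map_zero, hA', hB'] at h0
    linear_combination h0
  have hpsi0 : ∀ i, wirt (fun w => (2:ℂ)⁻¹ * (((fderiv ℝ X w 1 i : ℝ) : ℂ) + Complex.I * ((fderiv ℝ X w Complex.I i : ℝ) : ℂ))) z = 0 := by
    intro i
    rw [wirt_const_mul ((2:ℂ)⁻¹) ((hdAc i).fun_add ((hdBc i).const_mul Complex.I)),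
      wirt_add (hdAc i) ((hdBc i).const_mul Complex.I),
      wirt_const_mul Complex.I (hdBc i)]
    rw [show wirt (fun w => ((fderiv ℝ X w 1 i : ℝ) : ℂ)) z = -(Complex.I * wirt (fun w => ((fderiv ℝ X w Complex.I i : ℝ) : ℂ)) z) by
      linear_combination hchi i]
    ring
  have hphi : wirt (fun w => (2:ℂ)⁻¹ * (((fderiv ℝ X w 1 0 : ℝ) : ℂ) + Complex.I * ((fderiv ℝ X w Complex.I 0 : ℝ) : ℂ)) * ((unitNormal X w 0 : ℝ) : ℂ) + ((2:ℂ)⁻¹ * (((fderiv ℝ X w 1 1 : ℝ) : ℂ) + Complex.I * ((fderiv ℝ X w Complex.I 1 : ℝ) : ℂ)) * ((unitNormal X w 1 : ℝ) : ℂ) + (2:ℂ)⁻¹ * (((fderiv ℝ X w 1 2 : ℝ) : ℂ) + Complex.I * ((fderiv ℝ X w Complex.I 2 : ℝ) : ℂ)) * ((unitNormal X w 2 : ℝ) : ℂ))) z = 0 := by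
    have hev : (fun w => (2:ℂ)⁻¹ * (((fderiv ℝ X w 1 0 : ℝ) : ℂ) + Complex.I * ((fderiv ℝ X w Complex.I 0 : ℝ) : ℂ)) * ((unitNormal X w 0 : ℝ) : ℂ) + ((2:ℂ)⁻¹ * (((fderiv ℝ X w 1 1 : ℝ) : ℂ) + Complex.I * ((fderiv ℝ X w Complex.I 1 : ℝ) : ℂ)) * ((unitNormal X w 1 : ℝ) : ℂ) + (2:ℂ)⁻¹ * (((fderiv ℝ X w 1 2 : ℝ) : ℂ) + Complex.I * ((fderiv ℝ X w Complex.I 2 : ℝ) : ℂ)) * ((unitNormal X w 2 : ℝ) : ℂ))) =ᶠ[nhds z] (fun _ => (0:ℂ)) :=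
      Filter.eventuallyEq_of_mem hUz fun u hu => by
        have h1 : ∀ i, unitNormal X u i
            = (rnorm3 (crossR (fderiv ℝ X u 1) (fderiv ℝ X u Complex.I)))⁻¹ *
              crossR (fderiv ℝ X u 1) (fderiv ℝ X u Complex.I) i := fun i => rfl
        show _ = (0:ℂ)
        rw [h1 0, h1 1, h1 2]
        simp only [crossR, Matrix.cons_val_zero, Matrix.cons_val_one, Matrix.head_cons,
          Matrix.cons_val_two, Matrix.tail_cons]
        push_cast
        ring
    rw [wirt_congr hev, wirt_const]
  rw [wirt_add (f := fun w => (2:ℂ)⁻¹ * (((fderiv ℝ X w 1 0 : ℝ) : ℂ) + Complex.I * ((fderiv ℝ X w Complex.I 0 : ℝ) : ℂ)) * ((unitNormal X w 0 : ℝ) : ℂ))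
      (g := fun w => (2:ℂ)⁻¹ * (((fderiv ℝ X w 1 1 : ℝ) : ℂ) + Complex.I * ((fderiv ℝ X w Complex.I 1 : ℝ) : ℂ)) * ((unitNormal X w 1 : ℝ) : ℂ)
        + (2:ℂ)⁻¹ * (((fderiv ℝ X w 1 2 : ℝ) : ℂ) + Complex.I * ((fderiv ℝ X w Complex.I 2 : ℝ) : ℂ)) * ((unitNormal X w 2 : ℝ) : ℂ))
      (((hdAc 0).fun_add ((hdBc 0).const_mul Complex.I)).const_mul ((2:ℂ)⁻¹) |>.mul (hdcni 0))
      (((((hdAc 1).fun_add ((hdBc 1).const_mul Complex.I)).const_mul ((2:ℂ)⁻¹) |>.mul (hdcni 1))).add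
        ((((hdAc 2).fun_add ((hdBc 2).const_mul Complex.I)).const_mul ((2:ℂ)⁻¹) |>.mul (hdcni 2)))),
    wirt_add (f := fun w => (2:ℂ)⁻¹ * (((fderiv ℝ X w 1 1 : ℝ) : ℂ) + Complex.I * ((fderiv ℝ X w Complex.I 1 : ℝ) : ℂ)) * ((unitNormal X w 1 : ℝ) : ℂ))
      (g := fun w => (2:ℂ)⁻¹ * (((fderiv ℝ X w 1 2 : ℝ) : ℂ) + Complex.I * ((fderiv ℝ X w Complex.I 2 : ℝ) : ℂ)) * ((unitNormal X w 2 : ℝ) : ℂ))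
      ((((hdAc 1).fun_add ((hdBc 1).const_mul Complex.I)).const_mul ((2:ℂ)⁻¹)).mul (hdcni 1))
      ((((hdAc 2).fun_add ((hdBc 2).const_mul Complex.I)).const_mul ((2:ℂ)⁻¹)).mul (hdcni 2)),
    wirt_mul (((hdAc 0).fun_add ((hdBc 0).const_mul Complex.I)).const_mul ((2:ℂ)⁻¹)) (hdcni 0),
    wirt_mul (((hdAc 1).fun_add ((hdBc 1).const_mul Complex.I)).const_mul ((2:ℂ)⁻¹)) (hdcni 1),
    wirt_mul (((hdAc 2).fun_add ((hdBc 2).const_mul Complex.I)).const_mul ((2:ℂ)⁻¹)) (hdcni 2),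
    hpsi0 0, hpsi0 1, hpsi0 2] at hphi
  have Hw2 : ∑ i, ((fderiv ℝ X z 1 i : ℂ) + Complex.I * (fderiv ℝ X z Complex.I i : ℂ))
      * wirt (fun w => toC3 (unitNormal X w)) z i = 0 := by
    rw [Fin.sum_univ_three, hwvi 0, hwvi 1, hwvi 2]
    linear_combination 2 * hphi
  exact key_alg (fderiv ℝ X z 1) (fderiv ℝ X z Complex.I)
    (wirt (fun w => toC3 (unitNormal X w)) z) (hAB z hz) (hAA z hz) hszpos Hw1 Hw2
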